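/- arXiv:1307.1423 — 3 statements merged into one kernel-verified Lean document; each statement's English description precedes it below -/
import Mathlib

section
/- If y is absolutely continuous on [-1,1] with y' in L^2(-1,1) and satisfies ∫_{-1}^{1} y(t) dt = 0 and ∫_{-1}^{1} t·y(t) dt = 0, then for every x in (-1,1), |y(x)|^2 ≤ ((8 - 21x^2 + 30x^4 - 5x^6)/48) · ∫_{-1}^{1} |y'(t)|^2 dt. -/
/-!
Write `y x = y (-1) + ∫_{-1}^x y'`. Integrating by parts, the moment conditions become
`2 y (-1) = ∫ (s - 1) y'(s) ds` and `∫ (s² - 1) y'(s) ds = 0`, so `y x = ∫ K(x, s) y'(s) ds` for a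
kernel that is a step function plus a quadratic in `s`. Cauchy–Schwarz then gives
`y x ² ≤ ‖K(x, ·)‖² ‖y'‖²`, and `‖K(x, ·)‖²` is the stated polynomial by direct integration.
-/

/-- `W12 y g` : `y` is absolutely continuous on `[-1,1]` with derivative `g ∈ L²(-1,1)`. -/
def W12 (y g : ℝ → ℝ) : Prop :=
  IntervalIntegrable g MeasureTheory.volume (-1) 1 ∧
  IntervalIntegrable (fun t => g t ^ 2) MeasureTheory.volume (-1) 1 ∧
  ∀ t ∈ Set.Icc (-1 : ℝ) 1, y t = y (-1) + ∫ s in (-1 : ℝ)..t, g s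

open MeasureTheory Set intervalIntegral

theorem sq_integral_mul_le {α : Type*} [MeasurableSpace α] {μ : Measure α} {f g : α → ℝ}
    (hf : MemLp f 2 μ) (hg : MemLp g 2 μ) :
    (∫ a, f a * g a ∂μ) ^ 2 ≤ (∫ a, f a ^ 2 ∂μ) * ∫ a, g a ^ 2 ∂μ := by
  have h := real_inner_mul_inner_self_le (hf.toLp f) (hg.toLp g)
  have toLp_inner {u v : α → ℝ} (hu : MemLp u 2 μ) (hv : MemLp v 2 μ) :
      inner ℝ (hu.toLp u) (hv.toLp v) = ∫ a, u a * v a ∂μ :=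
    (L2.inner_def _ _).trans <| integral_congr_ae <|
      (hu.coeFn_toLp.and hv.coeFn_toLp).mono fun a ha => by simp [ha.1, ha.2, mul_comm]
  rw [toLp_inner hf hg, toLp_inner hf hf, toLp_inner hg hg] at h
  simpa only [sq] using h

theorem intervalIntegral.sq_integral_mul_le {f g : ℝ → ℝ} {a b : ℝ} (hab : a ≤ b)
    (hf : MemLp f 2 (volume.restrict (Ioc a b))) (hg : MemLp g 2 (volume.restrict (Ioc a b))) :
    (∫ t in a..b, f t * g t) ^ 2 ≤ (∫ t in a..b, f t ^ 2) * ∫ t in a..b, g t ^ 2 := by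
  simpa only [integral_of_le hab] using _root_.sq_integral_mul_le hf hg

theorem integral_sq_quadratic (A B C u v : ℝ) :
    ∫ s in u..v, (A + B * s + C * s ^ 2) ^ 2 =
      A ^ 2 * (v - u) + A * B * (v ^ 2 - u ^ 2) + (B ^ 2 + 2 * A * C) * (v ^ 3 - u ^ 3) / 3 +
        B * C * (v ^ 4 - u ^ 4) / 2 + C ^ 2 * (v ^ 5 - u ^ 5) / 5 := by
  have expand (s : ℝ) : (A + B * s + C * s ^ 2) ^ 2 = A ^ 2 * s ^ 0 + 2 * A * B * s ^ 1 +
      (B ^ 2 + 2 * A * C) * s ^ 2 + 2 * B * C * s ^ 3 + C ^ 2 * s ^ 4 := by ring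
  simp (disch := exact Continuous.intervalIntegrable (by fun_prop) _ _) only
    [expand, intervalIntegral.integral_add, intervalIntegral.integral_const_mul, integral_pow]
  push_cast
  ring

theorem intervalIntegral.integral_deriv_mul_primitive {φ g : ℝ → ℝ} {a b : ℝ}
    (hφ : ContDiff ℝ 1 φ) (hg : IntervalIntegrable g volume a b) :
    ∫ t in a..b, deriv φ t * ∫ s in a..t, g s =
      φ b * (∫ s in a..b, g s) - ∫ t in a..b, φ t * g t := by
  have hF := hg.absolutelyContinuousOnInterval_intervalIntegral (c := a) (by simp)
  have hφ' := (hφ.contDiffOn (s := uIcc a b)).absolutelyContinuousOnInterval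
  have hparts := hφ'.integral_mul_deriv_eq_deriv_mul hF
  have hderiv : ∫ t in a..b, φ t * deriv (fun x => ∫ s in a..x, g s) t =
      ∫ t in a..b, φ t * g t := by
    refine integral_congr_ae ?_
    filter_upwards [hg.ae_hasDerivAt_integral] with t ht ht'
    rw [(ht (uIoc_subset_uIcc ht') a left_mem_uIcc).deriv]
  simp only [hderiv, integral_same, mul_zero, sub_zero] at hparts
  linarith

namespace W12

variable {y g : ℝ → ℝ}

theorem memLp_two (hW : W12 y g) : MemLp g 2 (volume.restrict (Ioc (-1) 1)) :=
  (memLp_two_iff_integrable_sq hW.1.1.aestronglyMeasurable).2 hW.2.1.1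

theorem integral_deriv_mul_eq (hW : W12 y g) {φ : ℝ → ℝ} (hφ : ContDiff ℝ 1 φ) :
    ∫ t in (-1:ℝ)..1, deriv φ t * y t =
      (φ 1 - φ (-1)) * y (-1) + φ 1 * (∫ s in (-1:ℝ)..1, g s) -
        ∫ s in (-1:ℝ)..1, φ s * g s := by
  have hφ' : Continuous (deriv φ) := hφ.continuous_deriv le_rfl
  have hy : ∫ t in (-1:ℝ)..1, deriv φ t * y t =
      ∫ t in (-1:ℝ)..1, (y (-1) * deriv φ t + deriv φ t * ∫ s in (-1:ℝ)..t, g s) := by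
    refine integral_congr fun t ht => ?_
    rw [uIcc_of_le (by norm_num)] at ht
    rw [hW.2.2 t ht]
    ring
  have hF : ContinuousOn (fun t => ∫ s in (-1:ℝ)..t, g s) (uIcc (-1) 1) :=
    continuousOn_primitive_interval' hW.1 left_mem_uIcc
  rw [hy, integral_add (hφ'.intervalIntegrable _ _ |>.const_mul _)
      (hF.intervalIntegrable.continuousOn_mul hφ'.continuousOn),
    intervalIntegral.integral_const_mul,
    integral_deriv_eq_sub (fun t _ => hφ.differentiable one_ne_zero t)
      (hφ'.intervalIntegrable _ _),
    integral_deriv_mul_primitive hφ hW.1]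
  ring

end W12

/-- In `y x = ∫ K x s * y' s` the indicator accounts for `y x - y (-1)` and `(s - 1) / 2` for
`y (-1)` (vanishing mean). Any multiple of `s ^ 2 - 1` may be added, as its integral against `y'`
vanishes by the first moment condition; the coefficient makes `K x` orthogonal to `s ^ 2 - 1`,
which minimises `∫ K x s ^ 2`. -/
noncomputable def poincareKernel (x s : ℝ) : ℝ :=
  (Iic x).indicator 1 s + (s - 1) / 2 + 15 / 16 * (x - x ^ 3 / 3) * (s ^ 2 - 1)

theorem W12.integral_poincareKernel_mul {y g : ℝ → ℝ} (hW : W12 y g)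
    (h0 : ∫ t in (-1:ℝ)..1, y t = 0) (h1 : ∫ t in (-1:ℝ)..1, t * y t = 0)
    {x : ℝ} (hx : x ∈ Icc (-1) 1) :
    ∫ s in (-1:ℝ)..1, poincareKernel x s * g s = y x := by
  have hmean := hW.integral_deriv_mul_eq (φ := fun t => t - 1) (by fun_prop)
  have hmoment := hW.integral_deriv_mul_eq (φ := fun t => (t ^ 2 - 1) / 2) (by fun_prop)
  simp only [deriv_sub_const, deriv_id'', deriv_div_const, deriv_pow_field] at hmean hmoment
  norm_num at hmean hmoment
  rw [h0, eq_comm] at hmean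
  rw [h1, eq_comm, neg_eq_zero] at hmoment
  have hind : IntervalIntegrable ((Iic x).indicator g) volume (-1) 1 :=
    (intervalIntegrable_iff_integrableOn_Ioc_of_le (by norm_num)).2
      (hW.1.1.indicator measurableSet_Iic)
  have hpoly {p : ℝ → ℝ} (hp : Continuous p) :
      IntervalIntegrable (fun s => p s * g s) volume (-1) 1 :=
    hW.1.continuousOn_mul hp.continuousOn
  have hsplit : ∫ s in (-1:ℝ)..1, poincareKernel x s * g s =
      ∫ s in (-1:ℝ)..1, ((Iic x).indicator g s + (1 / 2 * ((s - 1) * g s)) +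
        15 / 8 * (x - x ^ 3 / 3) * ((s ^ 2 - 1) / 2 * g s)) := by
    refine integral_congr fun s _ => ?_
    simp only [poincareKernel, indicator_apply, Pi.one_apply]
    split_ifs <;> ring
  rw [hsplit, integral_add (hind.add ((hpoly (by fun_prop)).const_mul _))
      ((hpoly (by fun_prop)).const_mul _), integral_add hind ((hpoly (by fun_prop)).const_mul _),
    intervalIntegral.integral_const_mul, intervalIntegral.integral_const_mul, hmoment,
    show ∫ s in (-1:ℝ)..1, (Iic x).indicator g s = ∫ s in (-1:ℝ)..x, g s from
      integral_indicator hx, hW.2.2 x hx]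
  linarith

theorem memLp_poincareKernel (x : ℝ) :
    MemLp (poincareKernel x) 2 (volume.restrict (Ioc (-1) 1)) := by
  have hcont {p : ℝ → ℝ} (hp : Continuous p) : MemLp p 2 (volume.restrict (Ioc (-1) 1)) :=
    (memLp_two_iff_integrable_sq hp.aestronglyMeasurable).2 (hp.pow 2).integrableOn_Ioc
  have hind : MemLp ((Iic x).indicator (1 : ℝ → ℝ)) 2 (volume.restrict (Ioc (-1) 1)) :=
    (memLp_const (1 : ℝ)).indicator measurableSet_Iic
  exact (hind.add (hcont (p := fun s => (s - 1) / 2) (by fun_prop))).add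
    (hcont (p := fun s => 15 / 16 * (x - x ^ 3 / 3) * (s ^ 2 - 1)) (by fun_prop))

theorem integral_poincareKernel_sq {x : ℝ} (hx : x ∈ Icc (-1) 1) :
    ∫ s in (-1:ℝ)..1, poincareKernel x s ^ 2 =
      (8 - 21 * x ^ 2 + 30 * x ^ 4 - 5 * x ^ 6) / 48 := by
  set m := 15 / 16 * (x - x ^ 3 / 3)
  have hK : IntegrableOn (fun s => poincareKernel x s ^ 2) (Ioc (-1) 1) :=
    (memLp_poincareKernel x).integrable_sq
  have hleft : ∫ s in (-1:ℝ)..x, poincareKernel x s ^ 2 =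
      ∫ s in (-1:ℝ)..x, (1 / 2 - m + 1 / 2 * s + m * s ^ 2) ^ 2 := by
    refine integral_congr fun s hs => ?_
    rw [uIcc_of_le hx.1] at hs
    simp only [poincareKernel, indicator_of_mem (mem_Iic.2 hs.2), Pi.one_apply]
    ring
  have hright : ∫ s in x..1, poincareKernel x s ^ 2 =
      ∫ s in x..1, (-1 / 2 - m + 1 / 2 * s + m * s ^ 2) ^ 2 := by
    refine integral_congr_ae (Filter.Eventually.of_forall fun s hs => ?_)
    rw [uIoc_of_le hx.2] at hs
    simp only [poincareKernel, indicator_of_notMem (notMem_Iic.2 hs.1)]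
    ring
  rw [← integral_add_adjacent_intervals
      ((intervalIntegrable_iff_integrableOn_Ioc_of_le hx.1).2
        (hK.mono_set (Ioc_subset_Ioc_right hx.2)))
      ((intervalIntegrable_iff_integrableOn_Ioc_of_le hx.2).2
        (hK.mono_set (Ioc_subset_Ioc_left hx.1))),
    hleft, hright, integral_sq_quadratic, integral_sq_quadratic]
  ring

theorem poincare_m2 (y g : ℝ → ℝ) (hW : W12 y g)
    (h0 : (∫ t in (-1:ℝ)..1, y t) = 0)
    (h1 : (∫ t in (-1:ℝ)..1, t * y t) = 0) :
    ∀ x ∈ Set.Ioo (-1:ℝ) 1,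
      (y x) ^ 2 ≤ (8 - 21 * x ^ 2 + 30 * x ^ 4 - 5 * x ^ 6) / 48 *
        ∫ t in (-1:ℝ)..1, (g t) ^ 2 := by
  intro x hx
  have hx' : x ∈ Icc (-1) 1 := Ioo_subset_Icc_self hx
  rw [← hW.integral_poincareKernel_mul h0 h1 hx', ← integral_poincareKernel_sq hx']
  exact intervalIntegral.sq_integral_mul_le (by norm_num) (memLp_poincareKernel x) hW.memLp_two
end

section
/- For y ∈ W^{1,2}(-1,1) with ∫_{-1}^{1} y dt = 0 and ∫_{-1}^{1} t·y dt = 0 (i.e., m = 2), at the point x = 0 the sharp constant in |y(0)| ≤ B ( ∫_{-1}^{1}|y'|^2 dt )^{1/2} is B = 1/√6, the same as the sharp constant for m = 1 at x = 0. -/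
open MeasureTheory Set

section PiecewiseIntegral

variable {f g : ℝ → ℝ} {a b x : ℝ}

theorem eqOn_ite_le_left (hax : a ≤ x) :
    EqOn (fun s => if s ≤ x then f s else g s) f (uIoo a x) := fun s hs => by
  rw [uIoo_of_le hax] at hs
  simp [hs.2.le]

theorem eqOn_ite_le_right (hxb : x ≤ b) :
    EqOn (fun s => if s ≤ x then f s else g s) g (uIoo x b) := fun s hs => by
  rw [uIoo_of_le hxb] at hs
  simp [not_le.2 hs.1]

theorem intervalIntegrable_ite_le (hax : a ≤ x) (hxb : x ≤ b)
    (hf : IntervalIntegrable f volume a x) (hg : IntervalIntegrable g volume x b) :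
    IntervalIntegrable (fun s => if s ≤ x then f s else g s) volume a b :=
  (hf.congr_uIoo (eqOn_ite_le_left hax).symm).trans (hg.congr_uIoo (eqOn_ite_le_right hxb).symm)

theorem integral_ite_le (hax : a ≤ x) (hxb : x ≤ b)
    (hf : IntervalIntegrable f volume a x) (hg : IntervalIntegrable g volume x b) :
    ∫ s in a..b, (if s ≤ x then f s else g s) = (∫ s in a..x, f s) + ∫ s in x..b, g s := by
  rw [← intervalIntegral.integral_add_adjacent_intervals
      (hf.congr_uIoo (eqOn_ite_le_left hax).symm) (hg.congr_uIoo (eqOn_ite_le_right hxb).symm),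
    intervalIntegral.integral_congr_uIoo (eqOn_ite_le_left hax),
    intervalIntegral.integral_congr_uIoo (eqOn_ite_le_right hxb)]

end PiecewiseIntegral

theorem abs_integral_mul_le_sqrt_mul_sqrt {α : Type*} [MeasurableSpace α] {μ : Measure α}
    {f g : α → ℝ} (hf : MemLp f 2 μ) (hg : MemLp g 2 μ) :
    |∫ a, f a * g a ∂μ| ≤ √(∫ a, f a ^ 2 ∂μ) * √(∫ a, g a ^ 2 ∂μ) := by
  have holder := integral_mul_norm_le_Lp_mul_Lq Real.HolderConjugate.two_two
    (by simpa using hf) (by simpa using hg)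
  simp only [Real.norm_eq_abs, Real.rpow_two, sq_abs, ← Real.sqrt_eq_rpow] at holder
  calc |∫ a, f a * g a ∂μ| ≤ ∫ a, |f a| * |g a| ∂μ := by
        simpa only [abs_mul] using abs_integral_le_integral_abs (f := fun a => f a * g a)
    _ ≤ _ := holder

theorem abs_intervalIntegral_mul_le_sqrt_mul_sqrt {f g : ℝ → ℝ} {a b : ℝ} (hab : a ≤ b)
    (hf : IntervalIntegrable f volume a b) (hf2 : IntervalIntegrable (fun t => f t ^ 2) volume a b)
    (hg : IntervalIntegrable g volume a b) (hg2 : IntervalIntegrable (fun t => g t ^ 2) volume a b) :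
    |∫ t in a..b, f t * g t| ≤ √(∫ t in a..b, f t ^ 2) * √(∫ t in a..b, g t ^ 2) := by
  simp only [intervalIntegral.integral_of_le hab]
  exact abs_integral_mul_le_sqrt_mul_sqrt
    ((memLp_two_iff_integrable_sq hf.1.aestronglyMeasurable).2 hf2.1)
    ((memLp_two_iff_integrable_sq hg.1.aestronglyMeasurable).2 hg2.1)

theorem integral_eq_sub_integral_mul_of_eq_add_integral {y g : ℝ → ℝ} {a b : ℝ} (hab : a ≤ b)
    (hg : IntervalIntegrable g volume a b) (hy : ∀ t ∈ Icc a b, y t = y a + ∫ s in a..t, g s)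
    (c : ℝ) :
    ∫ t in a..b, y t = (b - c) * y b - (a - c) * y a - ∫ t in a..b, (t - c) * g t := by
  set F : ℝ → ℝ := fun t => ∫ s in a..t, g s
  have hF : AbsolutelyContinuousOnInterval F a b :=
    hg.absolutelyContinuousOnInterval_intervalIntegral left_mem_uIcc
  have hw : AbsolutelyContinuousOnInterval (fun t => t - c) a b :=
    (contDiff_id.sub contDiff_const).contDiffOn.absolutelyContinuousOnInterval
  have parts := hF.integral_mul_deriv_eq_deriv_mul hw
  have hderiv : ∫ t in a..b, deriv F t * (t - c) = ∫ t in a..b, (t - c) * g t := by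
    refine intervalIntegral.integral_congr_ae ?_
    filter_upwards [hg.ae_hasDerivAt_integral] with t ht htab
    rw [(ht (uIoc_subset_uIcc htab) a left_mem_uIcc).deriv, mul_comm]
  have hyF : ∫ t in a..b, y t = ∫ t in a..b, (y a + F t) :=
    intervalIntegral.integral_congr fun t ht => hy t (by rwa [uIcc_of_le hab] at ht)
  simp only [deriv_sub_const, deriv_id'', mul_one, hderiv] at parts
  rw [hyF, intervalIntegral.integral_add intervalIntegrable_const
    (hF.continuousOn.intervalIntegrable), parts, hy b ⟨hab, le_rfl⟩]
  simp only [F, intervalIntegral.integral_same, intervalIntegral.integral_const, smul_eq_mul]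
  ring

namespace W12

variable {y g : ℝ → ℝ}

theorem intervalIntegrable_deriv (h : W12 y g) {a b : ℝ} (ha : a ∈ Icc (-1 : ℝ) 1)
    (hb : b ∈ Icc (-1 : ℝ) 1) : IntervalIntegrable g volume a b :=
  h.1.mono_set (uIcc_subset_uIcc (by rwa [uIcc_of_le (by norm_num)])
    (by rwa [uIcc_of_le (by norm_num)]))

theorem eq_add_integral (h : W12 y g) {a t : ℝ} (ha : a ∈ Icc (-1 : ℝ) 1)
    (ht : t ∈ Icc (-1 : ℝ) 1) : y t = y a + ∫ s in a..t, g s := by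
  have hm : (-1 : ℝ) ∈ Icc (-1 : ℝ) 1 := ⟨le_rfl, by norm_num⟩
  rw [h.2.2 t ht, h.2.2 a ha, add_assoc, intervalIntegral.integral_add_adjacent_intervals
    (h.intervalIntegrable_deriv hm ha) (h.intervalIntegrable_deriv ha ht)]

theorem continuousOn (h : W12 y g) : ContinuousOn y (Icc (-1) 1) := by
  refine (continuousOn_const.add ?_).congr h.2.2
  simpa [uIcc_of_le (show (-1 : ℝ) ≤ 1 by norm_num)] using
    intervalIntegral.continuousOn_primitive_interval' h.1 left_mem_uIcc

end W12

noncomputable def evalKernel (x s : ℝ) : ℝ := if s ≤ x then (s + 1) / 2 else (s - 1) / 2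

section evalKernel

variable {x : ℝ}

theorem intervalIntegrable_evalKernel (hx : x ∈ Icc (-1 : ℝ) 1) :
    IntervalIntegrable (evalKernel x) volume (-1) 1 :=
  intervalIntegrable_ite_le hx.1 hx.2 ((by fun_prop : Continuous _).intervalIntegrable _ _)
    ((by fun_prop : Continuous _).intervalIntegrable _ _)

theorem intervalIntegrable_evalKernel_sq (hx : x ∈ Icc (-1 : ℝ) 1) :
    IntervalIntegrable (fun s => evalKernel x s ^ 2) volume (-1) 1 := by
  simp only [evalKernel, ite_pow]
  exact intervalIntegrable_ite_le hx.1 hx.2 ((by fun_prop : Continuous _).intervalIntegrable _ _)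
    ((by fun_prop : Continuous _).intervalIntegrable _ _)

theorem integral_evalKernel_sq (hx : x ∈ Icc (-1 : ℝ) 1) :
    ∫ s in (-1 : ℝ)..1, evalKernel x s ^ 2 = (1 + 3 * x ^ 2) / 6 := by
  simp only [evalKernel, ite_pow]
  rw [integral_ite_le hx.1 hx.2 ((by fun_prop : Continuous _).intervalIntegrable _ _)
    ((by fun_prop : Continuous _).intervalIntegrable _ _)]
  simp only [div_pow, intervalIntegral.integral_div, integral_pow,
    intervalIntegral.integral_comp_add_right (fun s => s ^ 2),
    intervalIntegral.integral_comp_sub_right (fun s => s ^ 2)]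
  ring

end evalKernel

theorem W12.eq_integral_evalKernel_mul {y g : ℝ → ℝ} (h : W12 y g)
    (h0 : ∫ t in (-1 : ℝ)..1, y t = 0) {x : ℝ} (hx : x ∈ Icc (-1 : ℝ) 1) :
    y x = ∫ s in (-1 : ℝ)..1, evalKernel x s * g s := by
  have hm : (-1 : ℝ) ∈ Icc (-1 : ℝ) 1 := ⟨le_rfl, by norm_num⟩
  have hp : (1 : ℝ) ∈ Icc (-1 : ℝ) 1 := ⟨by norm_num, le_rfl⟩
  have hgl := h.intervalIntegrable_deriv hm hx
  have hgr := h.intervalIntegrable_deriv hx hp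
  -- the weights `t + 1` on `[-1, x]` and `t - 1` on `[x, 1]` kill the endpoint values `y (±1)`
  have hl := integral_eq_sub_integral_mul_of_eq_add_integral hx.1 hgl
    (fun t ht => h.eq_add_integral hm ⟨ht.1, ht.2.trans hx.2⟩) (-1)
  have hr := integral_eq_sub_integral_mul_of_eq_add_integral hx.2 hgr
    (fun t ht => h.eq_add_integral hx ⟨hx.1.trans ht.1, ht.2⟩) 1
  have hsplit : (∫ t in (-1 : ℝ)..x, y t) + ∫ t in x..1, y t = 0 := by
    rw [intervalIntegral.integral_add_adjacent_intervals, h0] <;>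
      refine (h.continuousOn.mono ?_).intervalIntegrable_of_Icc (by linarith [hx.1, hx.2])
    exacts [Icc_subset_Icc le_rfl hx.2, Icc_subset_Icc hx.1 le_rfl]
  simp only [evalKernel, ite_mul, sub_neg_eq_add] at hl ⊢
  rw [integral_ite_le hx.1 hx.2 (hgl.continuousOn_mul (by fun_prop))
    (hgr.continuousOn_mul (by fun_prop))]
  simp only [div_mul_eq_mul_div, intervalIntegral.integral_div]
  linarith

theorem W12.abs_le_sqrt_mul {y g : ℝ → ℝ} (h : W12 y g) (h0 : ∫ t in (-1 : ℝ)..1, y t = 0)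
    {x : ℝ} (hx : x ∈ Icc (-1 : ℝ) 1) :
    |y x| ≤ √((1 + 3 * x ^ 2) / 6) * √(∫ t in (-1 : ℝ)..1, g t ^ 2) := by
  rw [h.eq_integral_evalKernel_mul h0 hx, ← integral_evalKernel_sq hx]
  exact abs_intervalIntegral_mul_le_sqrt_mul_sqrt (by norm_num) (intervalIntegrable_evalKernel hx)
    (intervalIntegrable_evalKernel_sq hx) h.1 h.2.1

theorem sqrt_one_div_six : √(1 / 6) = √6 / 6 := by
  rw [Real.sqrt_div_self', one_div, one_div, Real.sqrt_inv]

theorem W12.abs_apply_zero_le {y g : ℝ → ℝ} (h : W12 y g) (h0 : ∫ t in (-1 : ℝ)..1, y t = 0) :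
    |y 0| ≤ √6 / 6 * √(∫ t in (-1 : ℝ)..1, g t ^ 2) := by
  have := h.abs_le_sqrt_mul h0 (x := 0) ⟨by norm_num, by norm_num⟩
  rwa [show ((1 : ℝ) + 3 * 0 ^ 2) / 6 = 1 / 6 by norm_num, sqrt_one_div_six] at this

noncomputable def extremalAtZero (t : ℝ) : ℝ := (|t| - 1) ^ 2 / 4 - 1 / 12

theorem extremalAtZero_neg (t : ℝ) : extremalAtZero (-t) = extremalAtZero t := by
  simp [extremalAtZero]

theorem extremalAtZero_zero : extremalAtZero 0 = 1 / 6 := by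
  norm_num [extremalAtZero]

theorem hasDerivAt_extremalAtZero {t : ℝ} (ht : t ≠ 0) :
    HasDerivAt extremalAtZero (evalKernel 0 t) t := by
  refine (((hasDerivAt_abs ht).sub_const 1).pow 2).div_const 4 |>.sub_const (1 / 12)
    |>.congr_deriv ?_
  rcases ht.lt_or_gt with ht | ht
  · simp only [evalKernel, ht.le, ↓reduceIte, abs_of_neg ht, sign_neg ht, SignType.coe_neg,
      SignType.coe_one]
    ring
  · simp only [evalKernel, not_le.2 ht, ↓reduceIte, abs_of_pos ht, sign_pos ht, SignType.coe_one]
    ring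

theorem W12_extremalAtZero : W12 extremalAtZero (evalKernel 0) := by
  have h0 : (0 : ℝ) ∈ Icc (-1 : ℝ) 1 := ⟨by norm_num, by norm_num⟩
  refine ⟨intervalIntegrable_evalKernel h0, intervalIntegrable_evalKernel_sq h0, fun t ht => ?_⟩
  rw [integral_eq_of_hasDerivAt_off_countable_of_le _ _ ht.1 (countable_singleton 0)
    (by unfold extremalAtZero; fun_prop) (fun s hs => hasDerivAt_extremalAtZero hs.2)
    ((intervalIntegrable_evalKernel h0).mono_set ?_)]
  · ring
  · exact uIcc_subset_uIcc_left (by rw [uIcc_of_le (by norm_num)]; exact ht)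

theorem integral_extremalAtZero : ∫ t in (-1 : ℝ)..1, extremalAtZero t = 0 := by
  have hE : Continuous extremalAtZero := by unfold extremalAtZero; fun_prop
  have hleft : ∫ t in (-1 : ℝ)..0, extremalAtZero t = ∫ t in (0 : ℝ)..1, extremalAtZero t := by
    simpa [extremalAtZero_neg] using
      (intervalIntegral.integral_comp_neg (a := 0) (b := 1) extremalAtZero).symm
  have hright :
      ∫ t in (0 : ℝ)..1, extremalAtZero t = ∫ t in (0 : ℝ)..1, ((t - 1) ^ 2 / 4 - 1 / 12) :=
    intervalIntegral.integral_congr fun t ht => by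
      rw [uIcc_of_le zero_le_one] at ht
      simp [extremalAtZero, abs_of_nonneg ht.1]
  rw [← intervalIntegral.integral_add_adjacent_intervals (b := 0) (hE.intervalIntegrable _ _)
    (hE.intervalIntegrable _ _), hleft, hright, intervalIntegral.integral_sub
    ((by fun_prop : Continuous _).intervalIntegrable _ _) intervalIntegrable_const]
  simp only [intervalIntegral.integral_div, intervalIntegral.integral_const, integral_pow,
    intervalIntegral.integral_comp_sub_right (fun s => s ^ 2), smul_eq_mul]
  norm_num

theorem integral_mul_extremalAtZero : ∫ t in (-1 : ℝ)..1, t * extremalAtZero t = 0 := by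
  have := intervalIntegral.integral_comp_neg (a := -1) (b := 1) fun t => t * extremalAtZero t
  simp only [extremalAtZero_neg, neg_mul, intervalIntegral.integral_neg, neg_neg] at this
  linarith

theorem sqrt_six_div_six_le_of_bound {B : ℝ}
    (hB : ∀ y g : ℝ → ℝ, W12 y g → ∫ t in (-1 : ℝ)..1, y t = 0 →
      ∫ t in (-1 : ℝ)..1, t * y t = 0 → |y 0| ≤ B * √(∫ t in (-1 : ℝ)..1, g t ^ 2)) :
    √6 / 6 ≤ B := by
  have h := hB _ _ W12_extremalAtZero integral_extremalAtZero integral_mul_extremalAtZero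
  rw [integral_evalKernel_sq ⟨by norm_num, by norm_num⟩, extremalAtZero_zero,
    abs_of_pos (by norm_num), show ((1 : ℝ) + 3 * 0 ^ 2) / 6 = 1 / 6 by norm_num] at h
  rw [← sqrt_one_div_six]
  refine le_of_mul_le_mul_right ?_ (Real.sqrt_pos.2 (by norm_num : (0 : ℝ) < 1 / 6))
  rwa [Real.mul_self_sqrt (by norm_num)]

theorem B1_eq_B2_at_zero :
    (∀ y g : ℝ → ℝ, W12 y g → (∫ t in (-1:ℝ)..1, y t) = 0 →
      |y 0| ≤ Real.sqrt 6 / 6 * Real.sqrt (∫ t in (-1:ℝ)..1, (g t) ^ 2)) ∧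
    (∀ B : ℝ,
      (∀ y g : ℝ → ℝ, W12 y g → (∫ t in (-1:ℝ)..1, y t) = 0 →
        |y 0| ≤ B * Real.sqrt (∫ t in (-1:ℝ)..1, (g t) ^ 2)) →
      Real.sqrt 6 / 6 ≤ B) ∧
    (∀ y g : ℝ → ℝ, W12 y g → (∫ t in (-1:ℝ)..1, y t) = 0 →
      (∫ t in (-1:ℝ)..1, t * y t) = 0 →
      |y 0| ≤ Real.sqrt 6 / 6 * Real.sqrt (∫ t in (-1:ℝ)..1, (g t) ^ 2)) ∧
    (∀ B : ℝ,
      (∀ y g : ℝ → ℝ, W12 y g → (∫ t in (-1:ℝ)..1, y t) = 0 →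
        (∫ t in (-1:ℝ)..1, t * y t) = 0 →
        |y 0| ≤ B * Real.sqrt (∫ t in (-1:ℝ)..1, (g t) ^ 2)) →
      Real.sqrt 6 / 6 ≤ B) :=
  ⟨fun _ _ h h0 => h.abs_apply_zero_le h0,
    fun _ hB => sqrt_six_div_six_le_of_bound fun y g h h0 _ => hB y g h h0,
    fun _ _ h h0 _ => h.abs_apply_zero_le h0,
    fun _ => sqrt_six_div_six_le_of_bound⟩
end

section
/- Let x ∈ (-1,1) and let Q(t) = (t^2 - x^2)/2. Then Q(x) = 0, Q'(1) = 1, Q'(-1) = -1, and with c = 3/(3x^2+1), the function y(t) = c(Q(t) - |t-x|) + 1 has zero mean on (-1,1) and satisfies ∫_{-1}^{1} (y'(t))^2 dt = 2c = 6/(3x^2+1). -/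
/-!
Both identities are explicit polynomial integrals once the interval is split at `x`, where
`|t - x|` and `y'` change their formula. Shifting the variable gives
`∫ |t - x| = ((1 + x)² + (1 - x)²) / 2 = 1 + x²` and
`∫ (y')² = c² ((1 + x)³ + (1 - x)³) / 3 = c² (6x² + 2) / 3`; both identities then reduce to
`c (3x² + 1) = 3`.
-/

open Set intervalIntegral

section Piecewise

variable {E : Type*} [NormedAddCommGroup E] [NormedSpace ℝ E] {μ : MeasureTheory.Measure ℝ}
  [MeasureTheory.NullSingletonClass μ] {f g : ℝ → E} {a b x : ℝ}

theorem intervalIntegral.integral_ite_lt (hax : a ≤ x) (hxb : x ≤ b)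
    (hf : IntervalIntegrable f μ a x) (hg : IntervalIntegrable g μ x b) :
    ∫ t in a..b, (if t < x then f t else g t) ∂μ =
      (∫ t in a..x, f t ∂μ) + ∫ t in x..b, g t ∂μ := by
  have hleft : EqOn f (fun t => if t < x then f t else g t) (uIoo a x) := by
    intro t ht
    rw [uIoo_of_le hax] at ht
    simp only [ht.2, if_true]
  have hright : EqOn g (fun t => if t < x then f t else g t) (uIoo x b) := by
    intro t ht
    rw [uIoo_of_le hxb] at ht
    simp only [ht.1.not_gt, if_false]
  rw [← integral_add_adjacent_intervals (hf.congr_uIoo hleft) (hg.congr_uIoo hright),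
    integral_congr_uIoo hleft, integral_congr_uIoo hright]

end Piecewise

theorem intervalIntegral.integral_abs_sub_of_le_of_le {a b x : ℝ} (hax : a ≤ x) (hxb : x ≤ b) :
    ∫ t in a..b, |t - x| = ((x - a) ^ 2 + (b - x) ^ 2) / 2 := by
  have habs : ∀ t, |t - x| = if t < x then x - t else t - x := fun t => by
    split_ifs with h
    · rw [abs_of_neg (sub_neg.2 h), neg_sub]
    · exact abs_of_nonneg (sub_nonneg.2 (not_lt.1 h))
  simp_rw [habs]
  rw [integral_ite_lt hax hxb (Continuous.intervalIntegrable (by fun_prop) _ _)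
      (Continuous.intervalIntegrable (by fun_prop) _ _),
    integral_comp_sub_left (fun t => t), integral_comp_sub_right (fun t => t), integral_id,
    integral_id]
  ring

theorem key_identity_m1 (x : ℝ) (hx : x ∈ Set.Ioo (-1:ℝ) 1) :
    let Q : ℝ → ℝ := fun t => (t ^ 2 - x ^ 2) / 2
    let c : ℝ := 3 / (3 * x ^ 2 + 1)
    let y : ℝ → ℝ := fun t => c * (Q t - |t - x|) + 1
    let y' : ℝ → ℝ := fun t => if t < x then c * (t + 1) else c * (t - 1)
    Q x = 0 ∧ deriv Q 1 = 1 ∧ deriv Q (-1) = -1 ∧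
    (∫ t in (-1:ℝ)..1, y t) = 0 ∧
    (∫ t in (-1:ℝ)..1, (y' t) ^ 2) = 2 * c ∧
    2 * c = 6 / (3 * x ^ 2 + 1) := by
  intro Q c y y'
  have hx1 : -1 ≤ x := hx.1.le
  have hx2 : x ≤ 1 := hx.2.le
  have hc : c * (3 * x ^ 2 + 1) = 3 := div_mul_cancel₀ _ (by positivity)
  have hQ : ∫ t in (-1:ℝ)..1, Q t = 1 / 3 - x ^ 2 := by
    rw [integral_div, integral_sub (intervalIntegrable_pow 2) intervalIntegrable_const,
      integral_pow, integral_const, smul_eq_mul]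
    ring
  have hmean : ∫ t in (-1:ℝ)..1, y t =
      c * ((∫ t in (-1:ℝ)..1, Q t) - ∫ t in (-1:ℝ)..1, |t - x|) + 2 := by
    rw [integral_add (Continuous.intervalIntegrable (by fun_prop) _ _) intervalIntegrable_const,
      integral_const_mul, integral_sub (Continuous.intervalIntegrable (by fun_prop) _ _)
        (Continuous.intervalIntegrable (by fun_prop) _ _)]
    norm_num
  have henergy : ∫ t in (-1:ℝ)..1, (y' t) ^ 2 = c ^ 2 * ((x + 1) ^ 3 + (1 - x) ^ 3) / 3 := by
    simp only [y', ite_pow, mul_pow]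
    rw [integral_ite_lt hx1 hx2 (Continuous.intervalIntegrable (by fun_prop) _ _)
        (Continuous.intervalIntegrable (by fun_prop) _ _),
      integral_const_mul, integral_const_mul, integral_comp_add_right (fun t => t ^ 2),
      integral_comp_sub_right (fun t => t ^ 2), integral_pow, integral_pow]
    ring
  refine ⟨by simp [Q], by simp [Q], by simp [Q], ?_, ?_, by ring⟩
  · rw [hmean, hQ, integral_abs_sub_of_le_of_le hx1 hx2]
    linear_combination (-2 / 3 : ℝ) * hc
  · rw [henergy]
    linear_combination (2 * c / 3) * hc
end
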